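/- Let M = M_1 ⊕ M_2 be a fully coHopfian right R-module that has couniserial dimension. Then c.u.dim(M_1) + c.u.dim(M_2) ≤ c.u.dim(M), where + denotes ordinal addition. -/

import Mathlib

/-!
Induct on `c.u.dim(M₁ ⊕ M₂)`. For `β < c.u.dim(M₂)` there is a submodule `K ≤ M₂` with `K ≇ M₂`
and `β ≤ c.u.dim(K)`: otherwise `M₂` would already lie in `ζ_β` (for `β = 1`, coHopficity makes
every nonzero submodule equal to `M₂`, so `M₂` is uniform). Since `M₁ ⊕ M₂` is coHopfian,
`M₁ ⊕ K ≇ M₁ ⊕ M₂`, so `c.u.dim(M₁ ⊕ K) < c.u.dim(M₁ ⊕ M₂)` and the induction hypothesis gives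
`c.u.dim(M₁) + β ≤ c.u.dim(M₁ ⊕ K) < c.u.dim(M₁ ⊕ M₂)`. As `β` was arbitrary, the claim follows.
-/

universe u v w

/-- A module is *uniform* if it is nonzero and any two nonzero submodules intersect
nontrivially. -/
def IsUniformModule (R : Type u) [Ring R] (M : Type v) [AddCommGroup M] [Module R M] : Prop :=
  Nontrivial M ∧ ∀ N₁ N₂ : Submodule R M, N₁ ≠ ⊥ → N₂ ≠ ⊥ → N₁ ⊓ N₂ ≠ ⊥

/-- The classes `ζ_α`, defined by transfinite induction: `ζ_1` is the class of uniform
modules, and for `α > 1`, `M ∈ ζ_α` iff every nonzero submodule `N` of `M` with `N ≇ M`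
lies in `ζ_β` for some `β < α`. -/
def ModuleZeta (R : Type u) [Ring R] (α : Ordinal.{v}) (M : Type v) [AddCommGroup M]
    [Module R M] : Prop :=
  (α = 1 ∧ IsUniformModule R M) ∨
    (1 < α ∧ ∀ N : Submodule R M, N ≠ ⊥ → ¬ Nonempty (N ≃ₗ[R] M) →
      ∃ β, ∃ _ : β < α, ModuleZeta R β N)
termination_by α

/-- A module has couniserial dimension iff it lies in `ζ_α` for some ordinal `α`. -/
def HasCUDim (R : Type u) [Ring R] (M : Type v) [AddCommGroup M] [Module R M] : Prop :=
  ∃ α : Ordinal.{v}, ModuleZeta R α M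

open Classical in
/-- The couniserial dimension of a module: the least `α` with `M ∈ ζ_α`, with the
convention that the zero module has couniserial dimension `0`. -/
noncomputable def cuDim (R : Type u) [Ring R] (M : Type v) [AddCommGroup M] [Module R M] :
    Ordinal.{v} :=
  if Subsingleton M then 0 else sInf {α | ModuleZeta R α M}

/-- A submodule is *essential* if it meets every nonzero submodule nontrivially. -/
def IsEssentialSubmodule (R : Type u) [Ring R] {M : Type v} [AddCommGroup M] [Module R M]
    (N : Submodule R M) : Prop :=
  ∀ K : Submodule R M, K ≠ ⊥ → N ⊓ K ≠ ⊥

/-- A module is *indecomposable* if it is nonzero and is not an (internal) direct sum of two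
nonzero submodules. -/
def IsIndecomposableModule (R : Type u) [Ring R] (M : Type v) [AddCommGroup M]
    [Module R M] : Prop :=
  Nontrivial M ∧ ∀ A B : Submodule R M, IsCompl A B → A = ⊥ ∨ B = ⊥

/-- A module is *coHopfian* if it is not isomorphic to a proper submodule of itself. -/
def IsCoHopfianModule (R : Type u) [Ring R] (M : Type v) [AddCommGroup M] [Module R M] : Prop :=
  ∀ N : Submodule R M, Nonempty (M ≃ₗ[R] N) → N = ⊤

/-- A module is *fully coHopfian* if every submodule is coHopfian. -/
def IsFullyCoHopfianModule (R : Type u) [Ring R] (M : Type v) [AddCommGroup M]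
    [Module R M] : Prop :=
  ∀ N : Submodule R M, IsCoHopfianModule R N

/-- A module `N` has the *cancellation property* if `N ⊕ A ≅ N ⊕ B` implies `A ≅ B`. -/
def HasCancellation (R : Type u) [Ring R] (N : Type v) [AddCommGroup N] [Module R N] : Prop :=
  ∀ (A B : Type v) [AddCommGroup A] [Module R A] [AddCommGroup B] [Module R B],
    Nonempty ((N × A) ≃ₗ[R] (N × B)) → Nonempty (A ≃ₗ[R] B)

/-- A module is *Dedekind finite* if it is not isomorphic to a proper direct summand of
itself. -/
def IsDedekindFiniteModule (R : Type u) [Ring R] (M : Type v) [AddCommGroup M]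
    [Module R M] : Prop :=
  ∀ A B : Submodule R M, IsCompl A B → Nonempty (M ≃ₗ[R] A) → B = ⊥

/-- A ring is *semiprime* if it has no nonzero nilpotent two-sided ideal; equivalently,
`a R a = 0` implies `a = 0`. -/
def IsSemiprimeRing (R : Type u) [Ring R] : Prop :=
  ∀ a : R, (∀ x : R, a * x * a = 0) → a = 0

/-- An ideal is an *annihilator ideal* if it is the annihilator of a subset of the ring. -/
def IsAnnihilatorIdeal (R : Type u) [Ring R] (I : Ideal R) : Prop :=
  ∃ S : Set R, (I : Set R) = {x : R | ∀ s ∈ S, x * s = 0}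

/-- A module has *uniform dimension `n`* if it contains `n` independent uniform submodules
whose direct sum is essential. -/
def HasFiniteUniformDim (R : Type u) [Ring R] (M : Type v) [AddCommGroup M] [Module R M]
    (n : ℕ) : Prop :=
  ∃ U : Fin n → Submodule R M, iSupIndep U ∧ (∀ i, IsUniformModule R (U i)) ∧
    IsEssentialSubmodule R (⨆ i, U i)

/-- A ring is *Goldie* if it has the ascending chain condition on annihilator ideals and
finite uniform dimension as a module over itself. -/
def IsGoldieRing (R : Type u) [Ring R] : Prop :=
  (∀ f : ℕ → Ideal R, (∀ n, IsAnnihilatorIdeal R (f n)) → Monotone f →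
      ∃ n, ∀ k, n ≤ k → f k = f n) ∧
    ∃ n : ℕ, HasFiniteUniformDim R R n

section CouniserialDimension

variable {R : Type u} [Ring R] {M M' P : Type v} [AddCommGroup M] [Module R M]
  [AddCommGroup M'] [Module R M'] [AddCommGroup P] [Module R P]

theorem Submodule.map_ne_bot_of_injective {f : P →ₗ[R] M} (hf : Function.Injective f)
    {p : Submodule R P} (hp : p ≠ ⊥) : p.map f ≠ ⊥ := fun h =>
  hp (Submodule.map_injective_of_injective hf (h.trans (Submodule.map_bot f).symm))

theorem LinearMap.range_ne_bot_of_injective [Nontrivial P] {f : P →ₗ[R] M}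
    (hf : Function.Injective f) : LinearMap.range f ≠ ⊥ := by
  rw [LinearMap.range_eq_map]
  exact Submodule.map_ne_bot_of_injective hf top_ne_bot

theorem IsUniformModule.of_injective [Nontrivial P] {f : P →ₗ[R] M} (hf : Function.Injective f)
    (h : IsUniformModule R M) : IsUniformModule R P := by
  refine ⟨‹_›, fun N₁ N₂ h₁ h₂ h₁₂ => h.2 (N₁.map f) (N₂.map f) ?_ ?_ ?_⟩
  · exact Submodule.map_ne_bot_of_injective hf h₁
  · exact Submodule.map_ne_bot_of_injective hf h₂
  · rw [← Submodule.map_inf _ hf, h₁₂, Submodule.map_bot]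

theorem ModuleZeta.of_equiv (α : Ordinal.{v}) :
    ∀ {M M' : Type v} [AddCommGroup M] [Module R M] [AddCommGroup M'] [Module R M'],
      (M ≃ₗ[R] M') → ModuleZeta R α M → ModuleZeta R α M' := by
  induction α using WellFoundedLT.induction with
  | ind α IH =>
    intro M M' _ _ _ _ e h
    rw [ModuleZeta] at h ⊢
    rcases h with ⟨rfl, hu⟩ | ⟨hα, h⟩
    · have : Nontrivial M' := e.toEquiv.nontrivial_congr.mp hu.1
      exact Or.inl ⟨rfl, hu.of_injective e.symm.injective⟩
    · refine Or.inr ⟨hα, fun N hN hNM' => ?_⟩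
      let eN : N.map (e.symm : M' →ₗ[R] M) ≃ₗ[R] N := (e.symm.submoduleMap N).symm
      obtain ⟨β, hβ, hζ⟩ := h (N.map (e.symm : M' →ₗ[R] M))
        (Submodule.map_ne_bot_iff.mpr hN)
        (fun ⟨g⟩ => hNM' ⟨eN.symm.trans (g.trans e)⟩)
      exact ⟨β, hβ, IH β hβ eN hζ⟩

theorem ModuleZeta.one_le {α : Ordinal.{v}} (h : ModuleZeta R α M) : 1 ≤ α := by
  rw [ModuleZeta] at h
  rcases h with ⟨rfl, -⟩ | ⟨hα, -⟩
  exacts [le_rfl, hα.le]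

theorem ModuleZeta.cuDim_le {α : Ordinal.{v}} (h : ModuleZeta R α M) : cuDim R M ≤ α := by
  unfold cuDim
  split_ifs
  exacts [zero_le, csInf_le' h]

theorem cuDim_of_subsingleton [Subsingleton M] : cuDim R M = 0 :=
  if_pos ‹_›

theorem HasCUDim.moduleZeta_cuDim [Nontrivial M] (h : HasCUDim R M) :
    ModuleZeta R (cuDim R M) M := by
  rw [cuDim, if_neg (not_subsingleton M)]
  exact csInf_mem h

theorem HasCUDim.one_le_cuDim [Nontrivial M] (h : HasCUDim R M) : 1 ≤ cuDim R M :=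
  h.moduleZeta_cuDim.one_le

theorem cuDim_congr (e : M ≃ₗ[R] M') : cuDim R M = cuDim R M' := by
  have hζ : {γ | ModuleZeta R γ M} = {γ | ModuleZeta R γ M'} :=
    Set.ext fun γ => ⟨ModuleZeta.of_equiv γ e, ModuleZeta.of_equiv γ e.symm⟩
  rw [cuDim, cuDim, hζ]
  classical
  exact if_congr e.toEquiv.subsingleton_congr rfl rfl

theorem ModuleZeta.of_injective [Nontrivial P] {α : Ordinal.{v}} (h : ModuleZeta R α M)
    {f : P →ₗ[R] M} (hf : Function.Injective f) : ∃ β ≤ α, ModuleZeta R β P := by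
  by_cases hPM : Nonempty (P ≃ₗ[R] M)
  · exact ⟨α, le_rfl, h.of_equiv α hPM.some.symm⟩
  let e : P ≃ₗ[R] LinearMap.range f := LinearEquiv.ofInjective f hf
  rw [ModuleZeta] at h
  rcases h with ⟨rfl, hu⟩ | ⟨-, h⟩
  · exact ⟨1, le_rfl, by rw [ModuleZeta]; exact Or.inl ⟨rfl, hu.of_injective hf⟩⟩
  obtain ⟨β, hβ, hζ⟩ := h (LinearMap.range f)
    (LinearMap.range_ne_bot_of_injective hf)
    (fun ⟨g⟩ => hPM ⟨e.trans g⟩)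
  exact ⟨β, hβ.le, hζ.of_equiv β e.symm⟩

theorem HasCUDim.of_injective [Nontrivial P] (h : HasCUDim R M) {f : P →ₗ[R] M}
    (hf : Function.Injective f) : HasCUDim R P :=
  let ⟨_, hζ⟩ := h
  let ⟨β, _, hβ⟩ := hζ.of_injective hf
  ⟨β, hβ⟩

theorem ModuleZeta.cuDim_lt_of_injective [Nontrivial P] {α : Ordinal.{v}}
    (h : ModuleZeta R α M) (hM : ¬ IsUniformModule R M) {f : P →ₗ[R] M}
    (hf : Function.Injective f) (hPM : ¬ Nonempty (P ≃ₗ[R] M)) : cuDim R P < α := by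
  let e : P ≃ₗ[R] LinearMap.range f := LinearEquiv.ofInjective f hf
  rw [ModuleZeta] at h
  rcases h with ⟨-, hu⟩ | ⟨-, h⟩
  · exact absurd hu hM
  obtain ⟨β, hβ, hζ⟩ := h (LinearMap.range f)
    (LinearMap.range_ne_bot_of_injective hf)
    (fun ⟨g⟩ => hPM ⟨e.trans g⟩)
  exact ((hζ.of_equiv β e.symm).cuDim_le).trans_lt hβ

theorem IsCoHopfianModule.surjective_of_injective (h : IsCoHopfianModule R M) {f : M →ₗ[R] M}
    (hf : Function.Injective f) : Function.Surjective f :=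
  LinearMap.range_eq_top.mp (h _ ⟨LinearEquiv.ofInjective f hf⟩)

theorem IsCoHopfianModule.of_equiv (e : M ≃ₗ[R] M') (h : IsCoHopfianModule R M) :
    IsCoHopfianModule R M' := by
  rintro N ⟨g⟩
  exact Submodule.map_eq_top_iff.mp (h _ ⟨(e.trans g).trans (e.symm.submoduleMap N)⟩)

theorem IsFullyCoHopfianModule.of_injective {f : P →ₗ[R] M} (hf : Function.Injective f)
    (h : IsFullyCoHopfianModule R M) : IsFullyCoHopfianModule R P := fun Q =>
  (h (Q.map f)).of_equiv (Submodule.equivMapOfInjective f hf Q).symm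

theorem IsFullyCoHopfianModule.isCoHopfianModule (h : IsFullyCoHopfianModule R M) :
    IsCoHopfianModule R M :=
  (h ⊤).of_equiv Submodule.topEquiv

theorem not_isUniformModule_prod [Nontrivial M] [Nontrivial M'] :
    ¬ IsUniformModule R (M × M') := fun hu =>
  hu.2 _ _ (LinearMap.range_ne_bot_of_injective LinearMap.inl_injective)
    (LinearMap.range_ne_bot_of_injective LinearMap.inr_injective) LinearMap.disjoint_inl_inr.eq_bot

theorem HasCUDim.cuDim_le_of_forall_cuDim_lt (h : HasCUDim R M) (hM : IsCoHopfianModule R M)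
    {β : Ordinal.{v}} (hβ : ∀ N : Submodule R M, ¬ Nonempty (N ≃ₗ[R] M) → cuDim R N < β) :
    cuDim R M ≤ β := by
  rcases subsingleton_or_nontrivial M with hM₀ | hM₀
  · rw [cuDim_of_subsingleton]
    exact zero_le
  have hsub : ∀ N : Submodule R M, N ≠ ⊥ → ModuleZeta R (cuDim R N) N := fun N hN =>
    have := Submodule.nontrivial_iff_ne_bot.mpr hN
    (h.of_injective N.injective_subtype).moduleZeta_cuDim
  have hβ₀ : 0 < β := (hβ ⊥ fun ⟨e⟩ => not_subsingleton M e.toEquiv.symm.subsingleton).trans_le'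
    zero_le
  rcases (Order.one_le_iff_pos.mpr hβ₀).eq_or_lt with rfl | hβ₁
  · -- a nonzero submodule has `cuDim ≥ 1`, so it is isomorphic to `M`, hence all of `M`
    have hu : IsUniformModule R M := by
      refine ⟨hM₀, fun N₁ N₂ h₁ _ => ?_⟩
      have hN₁ : N₁ = ⊤ := by
        by_contra hN₁
        exact (hsub N₁ h₁).one_le.not_gt (hβ N₁ fun ⟨e⟩ => hN₁ (hM _ ⟨e.symm⟩))
      rwa [hN₁, top_inf_eq]
    exact ModuleZeta.cuDim_le (by rw [ModuleZeta]; exact Or.inl ⟨rfl, hu⟩)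
  · exact ModuleZeta.cuDim_le (by
      rw [ModuleZeta]
      exact Or.inr ⟨hβ₁, fun N hN hNM => ⟨cuDim R N, hβ N hNM, hsub N hN⟩⟩)

theorem cuDim_prod_lt_of_injective [Nontrivial M] [Nontrivial M']
    (hfc : IsFullyCoHopfianModule R (M × M')) (h : HasCUDim R (M × M')) {g : P →ₗ[R] M'}
    (hg : Function.Injective g) (hPM' : ¬ Nonempty (P ≃ₗ[R] M')) :
    cuDim R (M × P) < cuDim R (M × M') := by
  let f : M × P →ₗ[R] M × M' := LinearMap.prodMap LinearMap.id g
  have hf : Function.Injective f := Function.injective_id.prodMap hg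
  refine h.moduleZeta_cuDim.cuDim_lt_of_injective not_isUniformModule_prod hf fun ⟨e⟩ => hPM' ?_
  have hsurj := hfc.isCoHopfianModule.surjective_of_injective
    (f := f ∘ₗ e.symm.toLinearMap) (hf.comp e.symm.injective)
  refine ⟨LinearEquiv.ofBijective g ⟨hg, fun m => ?_⟩⟩
  obtain ⟨x, hx⟩ := hsurj (0, m)
  exact ⟨(e.symm x).2, congrArg Prod.snd hx⟩

theorem cuDim_add_cuDim_le_of_cuDim_prod_eq (M₁ : Type v) [AddCommGroup M₁] [Module R M₁]
    (α : Ordinal.{v}) :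
    ∀ (M₂ : Type v) [AddCommGroup M₂] [Module R M₂], IsFullyCoHopfianModule R (M₁ × M₂) →
      HasCUDim R (M₁ × M₂) → cuDim R (M₁ × M₂) = α → cuDim R M₁ + cuDim R M₂ ≤ α := by
  induction α using WellFoundedLT.induction with
  | ind α IH =>
  rintro M₂ _ _ hfc h rfl
  rcases subsingleton_or_nontrivial M₂ with h₂ | h₂
  · let : Unique M₂ := uniqueOfSubsingleton 0
    rw [cuDim_of_subsingleton (M := M₂), add_zero]
    exact (cuDim_congr LinearEquiv.prodUnique).ge
  rcases subsingleton_or_nontrivial M₁ with h₁ | h₁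
  · let : Unique M₁ := uniqueOfSubsingleton 0
    rw [cuDim_of_subsingleton (M := M₁), zero_add]
    exact (cuDim_congr LinearEquiv.uniqueProd).ge
  have h₂cu : HasCUDim R M₂ := h.of_injective LinearMap.inr_injective
  refine (Ordinal.add_le_iff (zero_lt_one.trans_le h₂cu.one_le_cuDim).ne').2 fun β hβ => ?_
  obtain ⟨K, hKM₂, hβK⟩ : ∃ K : Submodule R M₂, ¬ Nonempty (K ≃ₗ[R] M₂) ∧ β ≤ cuDim R K := by
    by_contra hK
    exact hβ.not_ge (h₂cu.cuDim_le_of_forall_cuDim_lt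
      (hfc.of_injective LinearMap.inr_injective).isCoHopfianModule
      fun K hKM₂ => not_le.mp fun hβK => hK ⟨K, hKM₂, hβK⟩)
  have hf : Function.Injective
      (LinearMap.prodMap LinearMap.id K.subtype : M₁ × K →ₗ[R] M₁ × M₂) :=
    Function.injective_id.prodMap K.injective_subtype
  have hlt := cuDim_prod_lt_of_injective hfc h K.injective_subtype hKM₂
  calc cuDim R M₁ + β ≤ cuDim R M₁ + cuDim R K := add_le_add_right hβK _
    _ ≤ cuDim R (M₁ × K) := IH _ hlt K (hfc.of_injective hf) (h.of_injective hf) rfl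
    _ < cuDim R (M₁ × M₂) := hlt

end CouniserialDimension

/-- If `M = M₁ ⊕ M₂` is fully coHopfian with couniserial dimension, then
`c.u.dim(M₁) + c.u.dim(M₂) ≤ c.u.dim(M)` (ordinal addition). -/
theorem stmt5 (R : Type u) [Ring R] (M₁ M₂ : Type v) [AddCommGroup M₁] [Module R M₁]
    [AddCommGroup M₂] [Module R M₂]
    (hfc : IsFullyCoHopfianModule R (M₁ × M₂)) (h : HasCUDim R (M₁ × M₂)) :
    cuDim R M₁ + cuDim R M₂ ≤ cuDim R (M₁ × M₂) :=
  cuDim_add_cuDim_le_of_cuDim_prod_eq M₁ _ M₂ hfc h rfl
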